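/- arXiv:2010.04555 — 2 statements merged into one kernel-verified Lean document; each statement's English description precedes it below -/
import Mathlib

section
/- Let X : Ω → (Fin n → ℝ) be a random vector on a probability space (Ω, P) with E[X_i] = 0 for all i and E[X_i · X_j] = σ² if i = j and 0 otherwise, where σ ≠ 0. Let W be an n × m real matrix with m > n such that every column of W is nonzero, let b ∈ Fin m → ℝ, and define Y_j = (Σ_i X_i · W i j) + b_j. Then there exist indices i ≠ j with Cov(Y_i, Y_j) ≠ 0. -/
/-!
Feeding white noise of variance `σ²` through the affine layer gives
`Cov(Y_i, Y_j) = σ² (WᵀW) i j`. If all off-diagonal covariances vanished, the `m` columns of `W`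
would be nonzero and pairwise orthogonal in `ℝⁿ`, hence linearly independent, forcing `m ≤ n`.
-/

open MeasureTheory Matrix ProbabilityTheory

namespace Matrix

variable {κ ι : Type*} [Fintype κ] [Fintype ι]

theorem card_le_of_isDiag_transpose_mul_self {W : Matrix κ ι ℝ} (hW : ∀ j, Wᵀ j ≠ 0)
    (hdiag : (Wᵀ * W).IsDiag) : Fintype.card ι ≤ Fintype.card κ := by
  let v : ι → EuclideanSpace ℝ κ := fun j => WithLp.toLp 2 (Wᵀ j)
  have hv : ∀ j, v j ≠ 0 := fun j hj => hW j (by simpa [v] using hj)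
  have horth : Pairwise fun i j => inner ℝ (v i) (v j) = 0 := fun i j hij => by
    simpa [v, PiLp.inner_apply, mul_apply, mul_comm] using hdiag hij
  simpa using (linearIndependent_of_ne_zero_of_inner_eq_zero hv horth).fintype_card_le_finrank

end Matrix

section Covariance

variable {Ω ι : Type*} [MeasurableSpace Ω] {P : Measure Ω} [IsProbabilityMeasure P]
  {X : Ω → ι → ℝ}

theorem covariance_sum_mul_add_const [Fintype ι] (hX : ∀ k, MemLp (fun ω => X ω k) 2 P)
    (a a' : ι → ℝ) (c c' : ℝ) :
    cov[fun ω => ∑ k, X ω k * a k + c, fun ω => ∑ l, X ω l * a' l + c'; P]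
      = ∑ k, ∑ l, a k * a' l * cov[fun ω => X ω k, fun ω => X ω l; P] := by
  have hmem : ∀ (a : ι → ℝ) k, MemLp (fun ω => X ω k * a k) 2 P := fun a k =>
    (hX k).mul_const _
  have hint : ∀ a : ι → ℝ, Integrable (fun ω => ∑ k, X ω k * a k) P := fun a =>
    integrable_finsetSum _ fun k _ => (hmem a k).integrable one_le_two
  rw [covariance_add_const_left (hint a), covariance_add_const_right (hint a'),
    covariance_fun_sum_fun_sum (hmem a) (hmem a')]
  simp only [covariance_mul_const_left, covariance_mul_const_right]
  exact Finset.sum_congr rfl fun k _ => Finset.sum_congr rfl fun l _ => by ring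

theorem covariance_eq_ite_of_white [DecidableEq ι] (hX : ∀ k, MemLp (fun ω => X ω k) 2 P)
    {σ : ℝ}
    (hmean : ∀ k, ∫ ω, X ω k ∂P = 0)
    (hcov : ∀ k l, ∫ ω, X ω k * X ω l ∂P = if k = l then σ ^ 2 else 0) (k l : ι) :
    cov[fun ω => X ω k, fun ω => X ω l; P] = if k = l then σ ^ 2 else 0 := by
  rw [covariance_eq_sub (hX k) (hX l), hmean, hmean, mul_zero, sub_zero]
  exact hcov k l

theorem covariance_sum_mul_add_const_of_white [Fintype ι] [DecidableEq ι]
    (hX : ∀ k, MemLp (fun ω => X ω k) 2 P) {σ : ℝ}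
    (hmean : ∀ k, ∫ ω, X ω k ∂P = 0)
    (hcov : ∀ k l, ∫ ω, X ω k * X ω l ∂P = if k = l then σ ^ 2 else 0)
    {κ : Type*} (W : Matrix ι κ ℝ) (b : κ → ℝ) (i j : κ) :
    cov[fun ω => ∑ k, X ω k * W k i + b i, fun ω => ∑ l, X ω l * W l j + b j; P]
      = σ ^ 2 * (Wᵀ * W) i j := by
  simp only [covariance_sum_mul_add_const hX, covariance_eq_ite_of_white hX hmean hcov,
    mul_ite, mul_zero, Finset.sum_ite_eq, Finset.mem_univ, if_true, mul_apply, transpose_apply,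
    Finset.mul_sum]
  exact Finset.sum_congr rfl fun k _ => by ring

end Covariance

theorem stmt_3_general {Ω : Type*} [MeasurableSpace Ω] (P : Measure Ω) [IsProbabilityMeasure P]
    {n m : ℕ} (X : Ω → (Fin n → ℝ))
    (hXL2 : ∀ i, MemLp (fun ω => X ω i) 2 P)
    (σ : ℝ) (hσ : σ ≠ 0)
    (hmean : ∀ i, ∫ ω, X ω i ∂P = 0)
    (hcov : ∀ i j, ∫ ω, X ω i * X ω j ∂P = if i = j then σ ^ 2 else 0)
    (W : Matrix (Fin n) (Fin m) ℝ) (hnm : m > n)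
    (hcols : ∀ j, (fun i => W i j) ≠ 0)
    (b : Fin m → ℝ)
    (Y : Ω → (Fin m → ℝ))
    (hY : ∀ ω j, Y ω j = (∑ i, X ω i * W i j) + b j) :
    ∃ i j, i ≠ j ∧
      ∫ ω, (Y ω i - ∫ ω', Y ω' i ∂P) * (Y ω j - ∫ ω', Y ω' j ∂P) ∂P ≠ 0 := by
  have hcovY : ∀ i j, cov[fun ω => Y ω i, fun ω => Y ω j; P] = σ ^ 2 * (Wᵀ * W) i j := by
    intro i j
    simp only [hY]
    exact covariance_sum_mul_add_const_of_white hXL2 hmean hcov W b i j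
  by_contra! huncorr
  have hdiag : (Wᵀ * W).IsDiag := fun i j hij => by
    have := huncorr i j hij
    rwa [← covariance, hcovY, mul_eq_zero, or_iff_right (pow_ne_zero 2 hσ)] at this
  have hmn : m ≤ n := by simpa using card_le_of_isDiag_transpose_mul_self hcols hdiag
  omega

/-- Corollary 1 of the paper: if `X` is centered with covariance `σ² • I` (`σ ≠ 0`)
and the layer `Y j = ∑ i, X i * W i j + b j` is wider than the input (`m > n`) with all
columns of `W` nonzero, then some pair of distinct coordinates of `Y` is correlated. -/
theorem stmt_3 {Ω : Type*} [MeasurableSpace Ω] (P : Measure Ω) [IsProbabilityMeasure P]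
    {n m : ℕ} (X : Ω → (Fin n → ℝ)) (hXmeas : Measurable X)
    (hXL2 : ∀ i, MemLp (fun ω => X ω i) 2 P)
    (σ : ℝ) (hσ : σ ≠ 0)
    (hmean : ∀ i, ∫ ω, X ω i ∂P = 0)
    (hcov : ∀ i j, ∫ ω, X ω i * X ω j ∂P = if i = j then σ ^ 2 else 0)
    (W : Matrix (Fin n) (Fin m) ℝ) (hnm : m > n)
    (hcols : ∀ j, (fun i => W i j) ≠ 0)
    (b : Fin m → ℝ)
    (Y : Ω → (Fin m → ℝ))
    (hY : ∀ ω j, Y ω j = (∑ i, X ω i * W i j) + b j) :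
    ∃ i j, i ≠ j ∧
      ∫ ω, (Y ω i - ∫ ω', Y ω' i ∂P) * (Y ω j - ∫ ω', Y ω' j ∂P) ∂P ≠ 0 :=
  stmt_3_general P X hXL2 σ hσ hmean hcov W hnm hcols b Y hY
end

section
/- Under the hypotheses of Statement 2 — r_i, r_j : Ω → ℝ are {0,1}-valued with P(r_i = 1) = P(r_j = 1) = p ∈ (0, 1], independent of each other and of the pair (φ_i, φ_j), where E[φ_i] = E[φ_j] = 0 and E[φ_i²] = E[φ_j²] = γ² > 0 — the absolute correlation after dropout satisfies |E[(r_iφ_i)(r_jφ_j)]| / sqrt(E[(r_iφ_i)²] E[(r_jφ_j)²]) ≤ |E[φ_i φ_j]| / γ², with strict inequality whenever p < 1 and E[φ_i φ_j] ≠ 0. -/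
/-!
Dropout scales each neuron by an independent Bernoulli(p) mask. Since `r² = r`, the second
moment of `r φ` is `p E[φ²]`, while the mixed moment of `rᵢ φᵢ` and `rⱼ φⱼ` picks up a factor
`E[rᵢ] E[rⱼ] = p²`. The correlation is therefore multiplied by `p² / p = p ≤ 1`.
-/

open MeasureTheory ProbabilityTheory

namespace Dropout

variable {Ω : Type*} [MeasurableSpace Ω] {μ : Measure Ω}

theorem integral_eq_measureReal_of_forall_eq_zero_or_one {r : Ω → ℝ} (hr : Measurable r)
    (hr01 : ∀ ω, r ω = 0 ∨ r ω = 1) : ∫ ω, r ω ∂μ = μ.real {ω | r ω = 1} := by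
  have hr_eq : r = Set.indicator {ω | r ω = 1} 1 := by
    funext ω
    rcases hr01 ω with h | h <;> simp [h]
  conv_lhs => rw [hr_eq]
  exact integral_indicator_one (hr (measurableSet_singleton 1))

theorem integral_mul_sq_eq_of_forall_eq_zero_or_one {r φ : Ω → ℝ}
    (hr : AEStronglyMeasurable r μ) (hφ : AEStronglyMeasurable φ μ)
    (hr01 : ∀ ω, r ω = 0 ∨ r ω = 1) (hind : IndepFun r (fun ω => φ ω ^ 2) μ) :
    ∫ ω, (r ω * φ ω) ^ 2 ∂μ = (∫ ω, r ω ∂μ) * ∫ ω, φ ω ^ 2 ∂μ := by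
  have hsq : ∀ ω, (r ω * φ ω) ^ 2 = r ω * φ ω ^ 2 := fun ω => by
    rcases hr01 ω with h | h <;> simp [h]
  simp_rw [hsq]
  exact hind.integral_fun_mul_eq_mul_integral hr (hφ.pow 2)

theorem integral_mul_mul_mul_eq_of_indepFun {ri rj φi φj : Ω → ℝ}
    (hri : AEStronglyMeasurable ri μ) (hrj : AEStronglyMeasurable rj μ)
    (hφi : AEStronglyMeasurable φi μ) (hφj : AEStronglyMeasurable φj μ)
    (hind : IndepFun (fun ω => (ri ω, rj ω)) (fun ω => (φi ω, φj ω)) μ) :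
    ∫ ω, (ri ω * φi ω) * (rj ω * φj ω) ∂μ =
      (∫ ω, ri ω * rj ω ∂μ) * ∫ ω, φi ω * φj ω ∂μ := by
  have hmul : Measurable fun q : ℝ × ℝ => q.1 * q.2 := measurable_fst.mul measurable_snd
  have hind' : IndepFun (fun ω => ri ω * rj ω) (fun ω => φi ω * φj ω) μ := hind.comp hmul hmul
  rw [← hind'.integral_fun_mul_eq_mul_integral (hri.mul hrj) (hφi.mul hφj)]
  congr 1 with ω
  ring

end Dropout

theorem abs_mul_mul_div_sqrt_mul_self {p c γ : ℝ} (hp : 0 < p) (hγ : 0 < γ) :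
    |p * p * c| / Real.sqrt ((p * γ) * (p * γ)) = p * (|c| / γ) := by
  rw [Real.sqrt_mul_self (mul_pos hp hγ).le, abs_mul, abs_of_pos (mul_pos hp hp)]
  field_simp

open Dropout in
theorem stmt_8_general {Ω : Type*} [MeasurableSpace Ω] (P : Measure Ω)
    (p : ℝ) (hp0 : 0 < p) (hp1 : p ≤ 1)
    (ri rj : Ω → ℝ) (hri : Measurable ri) (hrj : Measurable rj)
    (hri01 : ∀ ω, ri ω = 0 ∨ ri ω = 1) (hrj01 : ∀ ω, rj ω = 0 ∨ rj ω = 1)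
    (hriP : P {ω | ri ω = 1} = ENNReal.ofReal p)
    (hrjP : P {ω | rj ω = 1} = ENNReal.ofReal p)
    (φi φj : Ω → ℝ) (hφi : MemLp φi 2 P) (hφj : MemLp φj 2 P)
    (γ2 : ℝ) (hγ2 : 0 < γ2)
    (hvi : ∫ ω, φi ω ^ 2 ∂P = γ2) (hvj : ∫ ω, φj ω ^ 2 ∂P = γ2)
    (hindep_r : IndepFun ri rj P)
    (hindep : IndepFun (fun ω => (ri ω, rj ω)) (fun ω => (φi ω, φj ω)) P) :
    (|∫ ω, (ri ω * φi ω) * (rj ω * φj ω) ∂P| /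
        Real.sqrt ((∫ ω, (ri ω * φi ω) ^ 2 ∂P) * (∫ ω, (rj ω * φj ω) ^ 2 ∂P))
      ≤ |∫ ω, φi ω * φj ω ∂P| / γ2) ∧
    (p < 1 → (∫ ω, φi ω * φj ω ∂P) ≠ 0 →
      |∫ ω, (ri ω * φi ω) * (rj ω * φj ω) ∂P| /
          Real.sqrt ((∫ ω, (ri ω * φi ω) ^ 2 ∂P) * (∫ ω, (rj ω * φj ω) ^ 2 ∂P))
        < |∫ ω, φi ω * φj ω ∂P| / γ2) := by
  have hEri : ∫ ω, ri ω ∂P = p := by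
    rw [integral_eq_measureReal_of_forall_eq_zero_or_one hri hri01, measureReal_def, hriP,
      ENNReal.toReal_ofReal hp0.le]
  have hErj : ∫ ω, rj ω ∂P = p := by
    rw [integral_eq_measureReal_of_forall_eq_zero_or_one hrj hrj01, measureReal_def, hrjP,
      ENNReal.toReal_ofReal hp0.le]
  have hErr : ∫ ω, ri ω * rj ω ∂P = p * p := by
    rw [hindep_r.integral_fun_mul_eq_mul_integral hri.aestronglyMeasurable
      hrj.aestronglyMeasurable, hEri, hErj]
  have hden_i : ∫ ω, (ri ω * φi ω) ^ 2 ∂P = p * γ2 := by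
    rw [integral_mul_sq_eq_of_forall_eq_zero_or_one hri.aestronglyMeasurable
      hφi.aestronglyMeasurable hri01 (hindep.comp measurable_fst (measurable_fst.pow_const 2)),
      hEri, hvi]
  have hden_j : ∫ ω, (rj ω * φj ω) ^ 2 ∂P = p * γ2 := by
    rw [integral_mul_sq_eq_of_forall_eq_zero_or_one hrj.aestronglyMeasurable
      hφj.aestronglyMeasurable hrj01 (hindep.comp measurable_snd (measurable_snd.pow_const 2)),
      hErj, hvj]
  rw [integral_mul_mul_mul_eq_of_indepFun hri.aestronglyMeasurable hrj.aestronglyMeasurable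
    hφi.aestronglyMeasurable hφj.aestronglyMeasurable hindep, hErr, hden_i, hden_j,
    abs_mul_mul_div_sqrt_mul_self hp0 hγ2]
  have hcorr_nonneg : 0 ≤ |∫ ω, φi ω * φj ω ∂P| / γ2 := by positivity
  refine ⟨mul_le_of_le_one_left hcorr_nonneg hp1, fun hp1' hc => ?_⟩
  exact mul_lt_of_lt_one_left (div_pos (abs_pos.mpr hc) hγ2) hp1'

/-- Corollary of Statement 2 of the paper: dropout never increases the magnitude of the
correlation between two centered neurons, and strictly decreases it when `p < 1` and the
neurons are correlated. -/
theorem stmt_8 {Ω : Type*} [MeasurableSpace Ω] (P : Measure Ω) [IsProbabilityMeasure P]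
    (p : ℝ) (hp0 : 0 < p) (hp1 : p ≤ 1)
    (ri rj : Ω → ℝ) (hri : Measurable ri) (hrj : Measurable rj)
    (hri01 : ∀ ω, ri ω = 0 ∨ ri ω = 1) (hrj01 : ∀ ω, rj ω = 0 ∨ rj ω = 1)
    (hriP : P {ω | ri ω = 1} = ENNReal.ofReal p)
    (hrjP : P {ω | rj ω = 1} = ENNReal.ofReal p)
    (φi φj : Ω → ℝ) (hφi : MemLp φi 2 P) (hφj : MemLp φj 2 P)
    (hmi : ∫ ω, φi ω ∂P = 0) (hmj : ∫ ω, φj ω ∂P = 0)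
    (γ2 : ℝ) (hγ2 : 0 < γ2)
    (hvi : ∫ ω, φi ω ^ 2 ∂P = γ2) (hvj : ∫ ω, φj ω ^ 2 ∂P = γ2)
    (hindep_r : IndepFun ri rj P)
    (hindep : IndepFun (fun ω => (ri ω, rj ω)) (fun ω => (φi ω, φj ω)) P) :
    (|∫ ω, (ri ω * φi ω) * (rj ω * φj ω) ∂P| /
        Real.sqrt ((∫ ω, (ri ω * φi ω) ^ 2 ∂P) * (∫ ω, (rj ω * φj ω) ^ 2 ∂P))
      ≤ |∫ ω, φi ω * φj ω ∂P| / γ2) ∧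
    (p < 1 → (∫ ω, φi ω * φj ω ∂P) ≠ 0 →
      |∫ ω, (ri ω * φi ω) * (rj ω * φj ω) ∂P| /
          Real.sqrt ((∫ ω, (ri ω * φi ω) ^ 2 ∂P) * (∫ ω, (rj ω * φj ω) ^ 2 ∂P))
        < |∫ ω, φi ω * φj ω ∂P| / γ2) :=
  stmt_8_general P p hp0 hp1 ri rj hri hrj hri01 hrj01 hriP hrjP φi φj hφi hφj γ2 hγ2 hvi hvj
    hindep_r hindep
end
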